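/- For any two strings S1 and S2 of equal length, CT(S1) = CT(S2) if and only if FP(S1) = FP(S2). -/

import Mathlib

open List

inductive Shape where
  | nil : Shape
  | node : Shape → Shape → Shape
deriving DecidableEq

inductive BTree (α : Type*) where
  | nil : BTree α
  | node : BTree α → α → BTree α → BTree α

def BTree.shape {α : Type*} : BTree α → Shape
  | .nil => .nil
  | .node l _ r => .node l.shape r.shape

def BTree.rootVal {α : Type*} : BTree α → Option α
  | .nil => none
  | .node _ v _ => some v

section
variable {α : Type*} [LinearOrder α] [Inhabited α]

/-- Parent-distance value at 1-based position `i` of `S`. -/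
def pdVal (S : List α) (i : ℕ) : ℕ :=
  let J := (Finset.Ico 1 i).filter (fun j => S.getD (j-1) default ≤ S.getD (i-1) default)
  if h : J.Nonempty then i - J.max' h else 0

/-- Parent-distance encoding of `S` (1-based positions). -/
def PD (S : List α) : List ℕ := (List.range S.length).map (fun k => pdVal S (k+1))

/-- 0-based index of the leftmost minimum of `S`. -/
def leftmostMinIdx (S : List α) : ℕ :=
  ((List.range S.length).argmin (fun j => S.getD j default)).getD 0

def CTaux : ℕ → List α → BTree α
  | 0, _ => .nil
  | (n+1), S =>
    if S.isEmpty then .nil else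
      let i := leftmostMinIdx S
      .node (CTaux n (S.take i)) (S.getD i default) (CTaux n (S.drop (i+1)))

/-- The (labeled) Cartesian tree of `S`. -/
def CT (S : List α) : BTree α := CTaux S.length S

/-- Front pointers of a sequence `u` of naturals (1-based positions `k ≥ 2` with `k - u[k] = 1`). -/
def frontPointers (u : List ℕ) : Finset ℕ :=
  (Finset.Icc 2 u.length).filter (fun k => k - u.getD (k-1) 0 = 1)

/-- `FP(S)[i]`: number of front pointers of `PD(S[i..])` (1-based `i`). -/
def FPval (S : List α) (i : ℕ) : ℕ := (frontPointers (PD (S.drop (i-1)))).card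

/-- The FP encoding of `S`. -/
def FP (S : List α) : List ℕ := (List.range S.length).map (fun k => FPval S (k+1))

end

/-! Prepending `x` to `T` changes `CT T` only along its left spine: `x` is inserted at depth `d`,
the number of spine values `< x`, and the part of the spine below it becomes its right subtree.
The left spine of `CT T` consists of the strict prefix minima of `T`, and the front pointers of
`PD (x :: T)` are exactly the strict prefix minima of `T` that are `≥ x`, so `FP (x :: T)[1]` is
the spine length minus `d`. Hence the shape of `CT (x :: T)` and the pair formed by
`FP (x :: T)[1]` and the shape of `CT T` determine each other, and induction finishes. -/

theorem List.takeWhile_eq_filter_of_pairwise {α : Type*} {p : α → Bool} {l : List α}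
    (h : l.Pairwise fun a b => p b → p a) : l.takeWhile p = l.filter p := by
  induction l with
  | nil => rfl
  | cons a l ih =>
    rw [List.pairwise_cons] at h
    by_cases ha : p a
    · simp [ha, ih h.2]
    · simp only [List.takeWhile_cons, ha, List.filter_cons, Bool.false_eq_true, if_false]
      exact (List.filter_eq_nil_iff.mpr fun b hb hpb => ha (h.1 b hb hpb)).symm

namespace Shape

def leftSpineLength : Shape → ℕ
  | .nil => 0
  | .node l _ => leftSpineLength l + 1

/-- The shape obtained by inserting a new node at depth `d` of the left spine: the subtree
hanging there becomes its right child. -/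
def insertOnLeftSpine : ℕ → Shape → Shape
  | 0, t => .node .nil t
  | _ + 1, .nil => .node .nil .nil
  | d + 1, .node l r => .node (insertOnLeftSpine d l) r

theorem insertOnLeftSpine_ne_nil (d : ℕ) (t : Shape) : insertOnLeftSpine d t ≠ .nil := by
  cases d <;> cases t <;> simp [insertOnLeftSpine]

theorem insertOnLeftSpine_inj {d d' : ℕ} {t t' : Shape} (hd : d ≤ t.leftSpineLength)
    (hd' : d' ≤ t'.leftSpineLength) :
    insertOnLeftSpine d t = insertOnLeftSpine d' t' ↔ d = d' ∧ t = t' := by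
  refine ⟨fun h => ?_, by rintro ⟨rfl, rfl⟩; rfl⟩
  induction d generalizing d' t t' with
  | zero =>
    cases d' with
    | zero => simpa [insertOnLeftSpine] using h
    | succ d' =>
      cases t' with
      | nil => simp [leftSpineLength] at hd'
      | node l' r' =>
        simp only [insertOnLeftSpine, node.injEq] at h
        exact absurd h.1.symm (insertOnLeftSpine_ne_nil d' l')
  | succ d ih =>
    cases t with
    | nil => simp [leftSpineLength] at hd
    | node l r =>
      cases d' with
      | zero =>
        simp only [insertOnLeftSpine, node.injEq] at h
        exact absurd h.1 (insertOnLeftSpine_ne_nil d l)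
      | succ d' =>
        cases t' with
        | nil => simp [leftSpineLength] at hd'
        | node l' r' =>
          simp only [leftSpineLength, insertOnLeftSpine, node.injEq] at hd hd' h
          obtain ⟨rfl, rfl⟩ := ih (by omega) (by omega) h.1
          exact ⟨rfl, by rw [h.2]⟩

end Shape

namespace BTree

variable {α : Type*}

def leftSpine : BTree α → List α
  | .nil => []
  | .node l v _ => v :: leftSpine l

theorem leftSpineLength_shape (t : BTree α) : t.shape.leftSpineLength = t.leftSpine.length := by
  induction t with
  | nil => rfl
  | node l v r ihl => simp [shape, Shape.leftSpineLength, leftSpine, ihl]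

variable [LinearOrder α]

def pushFront (x : α) : BTree α → BTree α
  | .nil => .node .nil x .nil
  | .node l v r => if x ≤ v then .node .nil x (.node l v r) else .node (pushFront x l) v r

def pushFrontDepth (x : α) : BTree α → ℕ
  | .nil => 0
  | .node l v _ => if x ≤ v then 0 else pushFrontDepth x l + 1

theorem pushFrontDepth_le (x : α) (t : BTree α) :
    pushFrontDepth x t ≤ t.shape.leftSpineLength := by
  induction t with
  | nil => rfl
  | node l v r ihl =>
    simp only [pushFrontDepth, shape, Shape.leftSpineLength]
    split_ifs <;> omega

theorem shape_pushFront (x : α) (t : BTree α) :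
    (pushFront x t).shape = t.shape.insertOnLeftSpine (pushFrontDepth x t) := by
  induction t with
  | nil => rfl
  | node l v r ihl =>
    by_cases h : x ≤ v
    · simp [pushFront, pushFrontDepth, h, shape, Shape.insertOnLeftSpine]
    · simp [pushFront, pushFrontDepth, h, shape, Shape.insertOnLeftSpine, ihl]

theorem leftSpine_pushFront (x : α) (t : BTree α) :
    (pushFront x t).leftSpine = t.leftSpine.takeWhile (· < x) ++ [x] := by
  induction t with
  | nil => rfl
  | node l v r ihl =>
    by_cases h : x ≤ v
    · simp [pushFront, h, leftSpine, not_lt.2 h]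
    · simp [pushFront, h, leftSpine, lt_of_not_ge h, ihl]

theorem pushFrontDepth_eq_length_takeWhile (x : α) (t : BTree α) :
    pushFrontDepth x t = (t.leftSpine.takeWhile (· < x)).length := by
  induction t with
  | nil => rfl
  | node l v r ihl =>
    by_cases h : x ≤ v
    · simp [pushFrontDepth, h, leftSpine, not_lt.2 h]
    · simp [pushFrontDepth, h, leftSpine, lt_of_not_ge h, ihl]

end BTree

section CartesianTree

variable {α : Type*} [LinearOrder α] [Inhabited α]

def IsLeftmostMin (S : List α) (i : ℕ) : Prop :=
  i < S.length ∧ (∀ j < S.length, S.getD i default ≤ S.getD j default) ∧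
    ∀ j < i, S.getD i default < S.getD j default

theorem IsLeftmostMin.unique {S : List α} {i j : ℕ} (hi : IsLeftmostMin S i)
    (hj : IsLeftmostMin S j) : i = j := by
  obtain ⟨hi, hi_le, hi_lt⟩ := hi
  obtain ⟨hj, hj_le, hj_lt⟩ := hj
  by_contra hne
  rcases Nat.lt_or_gt_of_ne hne with h | h
  · exact (hj_lt i h).not_ge (hi_le j hj)
  · exact (hi_lt j h).not_ge (hj_le i hi)

theorem isLeftmostMin_leftmostMinIdx {S : List α} (hS : S ≠ []) :
    IsLeftmostMin S (leftmostMinIdx S) := by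
  set f : ℕ → α := fun j => S.getD j default
  obtain ⟨m, hm⟩ : ∃ m, (List.range S.length).argmin f = some m :=
    Option.ne_none_iff_exists'.mp (by simpa [List.argmin_eq_none] using hS)
  have hidx : ∀ j < S.length, (List.range S.length).idxOf j = j := fun j hj => by
    have := List.nodup_range.idxOf_getElem j (by simpa using hj)
    rwa [List.getElem_range] at this
  obtain ⟨hm_mem, hm_le, hm_first⟩ := List.mem_argmin_iff.mp hm
  rw [List.mem_range] at hm_mem
  have hlmi : leftmostMinIdx S = m := by
    change ((List.range S.length).argmin f).getD 0 = m
    rw [hm, Option.getD_some]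
  refine hlmi ▸ ⟨hm_mem, fun j hj => hm_le j (List.mem_range.mpr hj), fun j hj => ?_⟩
  by_contra hle
  have := hm_first j (List.mem_range.mpr (hj.trans hm_mem)) (not_lt.mp hle)
  rw [hidx m hm_mem, hidx j (hj.trans hm_mem)] at this
  omega

theorem leftmostMinIdx_eq {S : List α} {i : ℕ} (h : IsLeftmostMin S i) : leftmostMinIdx S = i :=
  (isLeftmostMin_leftmostMinIdx (List.ne_nil_of_length_pos (Nat.zero_lt_of_lt h.1))).unique h

theorem isLeftmostMin_cons_zero {x : α} {T : List α}
    (hx : ∀ j < T.length, x ≤ T.getD j default) :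
    IsLeftmostMin (x :: T) 0 := by
  refine ⟨by simp, fun j hj => ?_, by simp⟩
  cases j with
  | zero => exact le_rfl
  | succ j => exact hx j (by simpa using hj)

theorem IsLeftmostMin.cons {T : List α} {m : ℕ} (hm : IsLeftmostMin T m) {x : α}
    (hx : T.getD m default < x) : IsLeftmostMin (x :: T) (m + 1) := by
  obtain ⟨hm, hm_le, hm_lt⟩ := hm
  refine ⟨by simpa using hm, fun j hj => ?_, fun j hj => ?_⟩
  · cases j with
    | zero => exact hx.le
    | succ j => exact hm_le j (by simpa using hj)
  · cases j with
    | zero => exact hx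
    | succ j => exact hm_lt j (by omega)

theorem CTaux_nil (n : ℕ) : CTaux n ([] : List α) = .nil := by
  cases n <;> simp [CTaux]

theorem CTaux_node {n : ℕ} {S : List α} (hS : S ≠ []) :
    CTaux (n + 1) S = .node (CTaux n (S.take (leftmostMinIdx S)))
      (S.getD (leftmostMinIdx S) default) (CTaux n (S.drop (leftmostMinIdx S + 1))) := by
  simp [CTaux, hS]

theorem CTaux_eq_of_length_le {m n : ℕ} {S : List α} (hm : S.length ≤ m)
    (hn : S.length ≤ n) :
    CTaux m S = CTaux n S := by
  induction m generalizing n S with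
  | zero => rw [List.eq_nil_of_length_eq_zero (Nat.le_zero.mp hm), CTaux_nil, CTaux_nil]
  | succ m ih =>
    rcases eq_or_ne S [] with rfl | hS
    · rw [CTaux_nil, CTaux_nil]
    obtain ⟨n, rfl⟩ : ∃ k, n = k + 1 :=
      Nat.exists_eq_add_one.mpr ((List.length_pos_of_ne_nil hS).trans_le hn)
    have hi := (isLeftmostMin_leftmostMinIdx hS).1
    rw [CTaux_node hS, CTaux_node hS]
    congr 1 <;> apply ih <;> simp <;> omega

theorem CT_eq_node {S : List α} (hS : S ≠ []) :
    CT S = .node (CT (S.take (leftmostMinIdx S))) (S.getD (leftmostMinIdx S) default)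
      (CT (S.drop (leftmostMinIdx S + 1))) := by
  obtain ⟨n, hn⟩ := Nat.exists_eq_add_one.mpr (List.length_pos_of_ne_nil hS)
  have hi := (isLeftmostMin_leftmostMinIdx hS).1
  rw [CT, hn, CTaux_node hS, CT, CT]
  congr 1 <;> apply CTaux_eq_of_length_le <;> simp <;> omega

theorem CT_cons (x : α) (T : List α) : CT (x :: T) = (CT T).pushFront x := by
  rcases eq_or_ne T [] with rfl | hT
  · rw [CT_eq_node (List.cons_ne_nil x []), leftmostMinIdx_eq (isLeftmostMin_cons_zero (by simp))]
    rfl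
  obtain ⟨hm, hm_le, -⟩ := isLeftmostMin_leftmostMinIdx hT
  rw [CT_eq_node (List.cons_ne_nil x T), CT_eq_node hT]
  by_cases hx : x ≤ T.getD (leftmostMinIdx T) default
  · rw [leftmostMinIdx_eq (isLeftmostMin_cons_zero fun j hj => hx.trans (hm_le j hj))]
    simp only [List.take_zero, List.drop_succ_cons, List.drop_zero, List.getD_cons_zero,
      BTree.pushFront, if_pos hx, ← CT_eq_node hT]
    rfl
  · rw [leftmostMinIdx_eq ((isLeftmostMin_leftmostMinIdx hT).cons (not_le.mp hx))]
    simp only [List.take_succ_cons, List.drop_succ_cons, List.getD_cons_succ, BTree.pushFront,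
      if_neg hx, CT_cons x (T.take (leftmostMinIdx T))]
termination_by T.length
decreasing_by simpa using hm

theorem leftSpine_CT_sorted (T : List α) : (CT T).leftSpine.Pairwise (· < ·) := by
  induction T with
  | nil => exact List.Pairwise.nil
  | cons x T ih =>
    rw [CT_cons, BTree.leftSpine_pushFront, List.pairwise_append]
    refine ⟨ih.sublist (List.takeWhile_sublist _), by simp, fun a ha b hb => ?_⟩
    rw [List.mem_singleton.mp hb]
    simpa using List.mem_takeWhile_imp ha

theorem takeWhile_lt_leftSpine_CT (x : α) (T : List α) :
    (CT T).leftSpine.takeWhile (· < x) = (CT T).leftSpine.filter (· < x) :=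
  List.takeWhile_eq_filter_of_pairwise <|
    (leftSpine_CT_sorted T).imp fun hab hb => by simpa using hab.trans (by simpa using hb)

theorem leftSpine_CT_cons (y : α) (T : List α) :
    (CT (y :: T)).leftSpine = (CT T).leftSpine.filter (· < y) ++ [y] := by
  rw [CT_cons, BTree.leftSpine_pushFront, takeWhile_lt_leftSpine_CT]

theorem pushFrontDepth_CT (x : α) (T : List α) :
    (CT T).pushFrontDepth x = (CT T).leftSpine.countP (· < x) := by
  rw [BTree.pushFrontDepth_eq_length_takeWhile, takeWhile_lt_leftSpine_CT,
    List.countP_eq_length_filter]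

theorem shape_CT_cons (x : α) (T : List α) :
    (CT (x :: T)).shape = (CT T).shape.insertOnLeftSpine ((CT T).pushFrontDepth x) := by
  rw [CT_cons, BTree.shape_pushFront]

end CartesianTree

section FrontPointers

variable {α : Type*} [LinearOrder α] [Inhabited α]

theorem PD_length (S : List α) : (PD S).length = S.length := by
  simp [PD]

theorem PD_getD {S : List α} {k : ℕ} (hk : k < S.length) :
    (PD S).getD k 0 = pdVal S (k + 1) := by
  simp [PD, hk]

theorem sub_pdVal_eq_one_iff {S : List α} {k : ℕ} (hk : 2 ≤ k) :
    k - pdVal S k = 1 ↔ S.getD 0 default ≤ S.getD (k - 1) default ∧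
      ∀ j, 2 ≤ j → j < k → S.getD (k - 1) default < S.getD (j - 1) default := by
  simp only [pdVal]
  set J := (Finset.Ico 1 k).filter fun j => S.getD (j - 1) default ≤ S.getD (k - 1) default
  have hmemJ : ∀ j, j ∈ J ↔
      1 ≤ j ∧ j < k ∧ S.getD (j - 1) default ≤ S.getD (k - 1) default := by
    simp [J, and_assoc]
  split_ifs with hJ
  · obtain ⟨hm1, hmk, -⟩ := (hmemJ _).mp (J.max'_mem hJ)
    rw [show k - (k - J.max' hJ) = J.max' hJ by omega, Finset.max'_eq_iff, hmemJ]
    refine and_congr (by simp; omega) ⟨fun h j hj hjk => ?_, fun h j hj => ?_⟩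
    · by_contra hle
      have := h j ((hmemJ j).mpr ⟨by omega, hjk, not_lt.mp hle⟩)
      omega
    · obtain ⟨hj1, hjk, hle⟩ := (hmemJ j).mp hj
      by_contra hj2
      exact (h j (by omega) hjk).not_ge hle
  · exact iff_of_false (by omega) fun ⟨h1, _⟩ => hJ ⟨1, (hmemJ 1).mpr ⟨le_rfl, hk, h1⟩⟩

def strictPrefixMinCount (p : α → Prop) [DecidablePred p] (T : List α) : ℕ :=
  ((Finset.range T.length).filter fun q =>
    (∀ r < q, T.getD q default < T.getD r default) ∧ p (T.getD q default)).card

theorem strictPrefixMinCount_cons (p : α → Prop) [DecidablePred p] (y : α) (T : List α) :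
    strictPrefixMinCount p (y :: T) =
      strictPrefixMinCount (fun v => p v ∧ v < y) T + if p y then 1 else 0 := by
  simp only [strictPrefixMinCount, Finset.card_filter, List.length_cons, Finset.sum_range_succ',
    List.getD_cons_succ, List.getD_cons_zero]
  congr 1
  · refine Finset.sum_congr rfl fun q _ => if_congr ⟨?_, ?_⟩ rfl rfl
    · rintro ⟨hlt, hp⟩
      exact ⟨fun r hr => by simpa using hlt (r + 1) (by omega), hp,
        by simpa using hlt 0 q.succ_pos⟩
    · rintro ⟨hlt, hp, hy⟩
      refine ⟨fun r hr => ?_, hp⟩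
      cases r with
      | zero => exact hy
      | succ r => exact hlt r (by omega)
  · simp

theorem strictPrefixMinCount_eq_countP_leftSpine (p : α → Prop) [DecidablePred p] (T : List α) :
    strictPrefixMinCount p T = (CT T).leftSpine.countP (p ·) := by
  induction T generalizing p with
  | nil => rfl
  | cons y T ih =>
    rw [strictPrefixMinCount_cons, ih, leftSpine_CT_cons, List.countP_append, List.countP_filter]
    simp [List.countP_cons]

theorem card_frontPointers_PD_cons (x : α) (T : List α) :
    (frontPointers (PD (x :: T))).card = strictPrefixMinCount (x ≤ ·) T := by
  have hIcc : Finset.Icc 2 (T.length + 1) = (Finset.range T.length).map (addLeftEmbedding 2) := by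
    rw [Finset.range_eq_Ico, Finset.map_add_left_Ico, ← Finset.Ico_add_one_right_eq_Icc]
    congr 1
    omega
  rw [frontPointers, PD_length, List.length_cons, hIcc, Finset.filter_map, Finset.card_map,
    strictPrefixMinCount]
  congr 1
  refine Finset.filter_congr fun q hq => ?_
  rw [Finset.mem_range] at hq
  simp only [Function.comp_apply, addLeftEmbedding_apply]
  rw [show 2 + q - 1 = q + 1 by omega, PD_getD (by simpa using hq), show 2 + q = q + 1 + 1 by omega,
    sub_pdVal_eq_one_iff (by omega)]
  simp only [Nat.add_sub_cancel, List.getD_cons_zero, List.getD_cons_succ]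
  rw [and_comm]
  refine and_congr_left' ⟨fun h r hr => by simpa using h (r + 2) (by omega) (by omega),
    fun h j hj hjq => ?_⟩
  obtain ⟨r, rfl⟩ : ∃ r, j = r + 2 := ⟨j - 2, by omega⟩
  simpa using h r (by omega)

theorem card_frontPointers_PD_cons_add_pushFrontDepth (x : α) (T : List α) :
    (frontPointers (PD (x :: T))).card + (CT T).pushFrontDepth x =
      (CT T).shape.leftSpineLength := by
  rw [card_frontPointers_PD_cons, strictPrefixMinCount_eq_countP_leftSpine, pushFrontDepth_CT,
    BTree.leftSpineLength_shape, List.length_eq_countP_add_countP (x ≤ ·)]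
  simp

theorem FP_cons (x : α) (T : List α) :
    FP (x :: T) = (frontPointers (PD (x :: T))).card :: FP T := by
  rw [FP, List.length_cons, List.range_succ_eq_map, List.map_cons, List.map_map]
  rfl

end FrontPointers

theorem stmt7_general {α β : Type*} [LinearOrder α] [Inhabited α] [LinearOrder β] [Inhabited β]
    (S₁ : List α) (S₂ : List β) :
    (CT S₁).shape = (CT S₂).shape ↔ FP S₁ = FP S₂ := by
  induction S₁ generalizing S₂ with
  | nil =>
    cases S₂ with
    | nil => exact iff_of_true rfl rfl
    | cons y T =>
      rw [shape_CT_cons, FP_cons]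
      exact iff_of_false (Shape.insertOnLeftSpine_ne_nil _ _).symm (List.cons_ne_nil _ _).symm
  | cons x S ih =>
    cases S₂ with
    | nil =>
      rw [shape_CT_cons, FP_cons]
      exact iff_of_false (Shape.insertOnLeftSpine_ne_nil _ _) (List.cons_ne_nil _ _)
    | cons y T =>
      have hx := card_frontPointers_PD_cons_add_pushFrontDepth x S
      have hy := card_frontPointers_PD_cons_add_pushFrontDepth y T
      rw [shape_CT_cons, shape_CT_cons, FP_cons, FP_cons, List.cons_eq_cons, ← ih T,
        Shape.insertOnLeftSpine_inj (BTree.pushFrontDepth_le _ _) (BTree.pushFrontDepth_le _ _)]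
      refine and_congr_left fun hST => ?_
      rw [hST] at hx
      omega

/-- Two equal-length strings have equal Cartesian trees iff their FP encodings
coincide. -/
theorem stmt7 {α β : Type*} [LinearOrder α] [Inhabited α] [LinearOrder β] [Inhabited β]
    (S₁ : List α) (S₂ : List β) (hlen : S₁.length = S₂.length) :
    (CT S₁).shape = (CT S₂).shape ↔ FP S₁ = FP S₂ :=
  stmt7_general S₁ S₂
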